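/- Let d = 3, let φ_n be the Gaussian kernel on R³, and fix β > 0 and C₁ > 0. Then there exists C₃ > 0 such that for all integers k, n ≥ 1 and all pairs x, y ∈ Z³ with |x − y| ≥ C₁ k^{1/6}: √k · φ_n(β(x − y)) ≤ C₃ Σ_{z∈Z³, |z−y| ≤ C₁ k^{1/6}} φ_n(β(x − z)). -/

import Mathlib

open scoped BigOperators

/-- Euclidean norm of a lattice point in `ℤ^d`. -/
noncomputable def latNorm {d : ℕ} (x : Fin d → ℤ) : ℝ :=
  Real.sqrt (∑ i, ((x i : ℝ)) ^ 2)

/-- Coercion of a lattice point to a real vector. -/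
def toRealVec {d : ℕ} (x : Fin d → ℤ) : Fin d → ℝ := fun i => (x i : ℝ)

/-- One-step transition kernel of the simple random walk on `ℤ^d` with holding. -/
noncomputable def srwStep (d : ℕ) (x : Fin d → ℤ) : ℝ :=
  if latNorm x ≤ 1 then 1 / (2 * (d : ℝ) + 1) else 0

/-- `n`-step transition probabilities of the simple random walk on `ℤ^d` with holding,
defined by convolution powers with `P₀ = δ₀`. -/
noncomputable def srwP (d : ℕ) : ℕ → (Fin d → ℤ) → ℝ
  | 0 => fun x => if x = 0 then 1 else 0
  | n + 1 => fun x => ∑' y : Fin d → ℤ, srwP d n y * srwStep d (x - y)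

/-- The Gaussian (heat) kernel on `ℝ^d`: `φ_t(x) = (2πt)^{-d/2} exp(-|x|²/(2t))`. -/
noncomputable def gauss (d : ℕ) (t : ℝ) (x : Fin d → ℝ) : ℝ :=
  (2 * Real.pi * t) ^ (-(d : ℝ) / 2) * Real.exp (-(∑ i, (x i) ^ 2) / (2 * t))

/-
Write `a = x - y` and `R = C₁ k^{1/6}`. A lattice point `v` with `|a - v| ≤ |a|` contributes a
Gaussian term `φ_n(β(a - v)) ≥ φ_n(βa)`, whatever `n` is, so it suffices to find `≳ R³` such points
in the ball `|v| ≤ R`. Take `m = ⌊R/6⌋` and the box of `v` whose `i`-th coordinate has the sign of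
`a i` and absolute value between `m` and `2m`. Coordinatewise `(a_i - v_i)² ≤ a_i² + 4m² - 2m|a_i|`,
and `∑ |a_i| ≥ |a| ≥ R ≥ 6m`, so every such `v` satisfies `|a - v| ≤ |a|`; also `|v|² ≤ 12 m² ≤ R²`.
The box has `(m + 1)³ ≥ (R/6)³ = C₁³ √k / 216` points.
-/

open Finset

lemma abs_le_latNorm {d : ℕ} (x : Fin d → ℤ) (i : Fin d) : |(x i : ℝ)| ≤ latNorm x := by
  rw [← Real.sqrt_sq_eq_abs]
  exact Real.sqrt_le_sqrt (single_le_sum (fun j _ => sq_nonneg (x j : ℝ)) (mem_univ i))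

lemma latNorm_le_sum_abs {d : ℕ} (x : Fin d → ℤ) : latNorm x ≤ ∑ i, |(x i : ℝ)| := by
  rw [latNorm, Real.sqrt_le_left (by positivity)]
  simpa only [sq_abs] using
    sum_sq_le_sq_sum_of_nonneg (s := univ) fun i _ => abs_nonneg (x i : ℝ)

lemma finite_setOf_latNorm_le (d : ℕ) (R : ℝ) : {x : Fin d → ℤ | latNorm x ≤ R}.Finite := by
  refine (Set.finite_Icc (-fun _ => ⌈R⌉) fun _ => ⌈R⌉).subset fun x hx => ?_
  have hxi (i : Fin d) : |x i| ≤ ⌈R⌉ := by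
    have := (abs_le_latNorm x i).trans (hx.trans (Int.le_ceil R))
    exact_mod_cast this
  exact ⟨fun i => (abs_le.1 (hxi i)).1, fun i => (abs_le.1 (hxi i)).2⟩

lemma gauss_nonneg (d : ℕ) {t : ℝ} (ht : 0 ≤ t) (w : Fin d → ℝ) : 0 ≤ gauss d t w := by
  unfold gauss; positivity

lemma gauss_le_gauss_of_sum_sq_le (d : ℕ) {t : ℝ} (ht : 0 ≤ t) {u w : Fin d → ℝ}
    (h : ∑ i, u i ^ 2 ≤ ∑ i, w i ^ 2) : gauss d t w ≤ gauss d t u := by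
  unfold gauss
  gcongr

lemma gauss_smul_toRealVec_le_of_sum_sq_le (d : ℕ) {t : ℝ} (ht : 0 ≤ t) (β : ℝ) {u w : Fin d → ℤ}
    (h : ∑ i, u i ^ 2 ≤ ∑ i, w i ^ 2) :
    gauss d t (β • toRealVec w) ≤ gauss d t (β • toRealVec u) := by
  refine gauss_le_gauss_of_sum_sq_le d ht ?_
  simp only [Pi.smul_apply, toRealVec, smul_eq_mul, mul_pow, ← mul_sum]
  exact mul_le_mul_of_nonneg_left (by exact_mod_cast h) (sq_nonneg β)

noncomputable def signedIcc (c : ℤ) (m : ℕ) : Finset ℤ :=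
  if 0 ≤ c then Icc (m : ℤ) (2 * m) else Icc (-(2 * m : ℤ)) (-m)

lemma card_signedIcc (c : ℤ) (m : ℕ) : #(signedIcc c m) = m + 1 := by
  unfold signedIcc; split_ifs <;> simp <;> omega

lemma sq_le_of_mem_signedIcc {c v : ℤ} {m : ℕ} (hv : v ∈ signedIcc c m) :
    v ^ 2 ≤ 4 * m ^ 2 := by
  unfold signedIcc at hv
  split_ifs at hv <;> obtain ⟨h₁, h₂⟩ := mem_Icc.1 hv <;> nlinarith

lemma sq_sub_le_of_mem_signedIcc {c v : ℤ} {m : ℕ} (hv : v ∈ signedIcc c m) :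
    (c - v) ^ 2 + 2 * m * |c| ≤ c ^ 2 + 4 * m ^ 2 := by
  unfold signedIcc at hv
  split_ifs at hv with hc <;> obtain ⟨h₁, h₂⟩ := mem_Icc.1 hv
  · rw [abs_of_nonneg hc]; nlinarith
  · rw [abs_of_neg (not_le.1 hc)]; nlinarith

section SignedBox

variable {d m : ℕ} {a v : Fin d → ℤ}

lemma sum_sq_le_of_mem_piFinset_signedIcc
    (hv : v ∈ Fintype.piFinset fun i => signedIcc (a i) m) :
    ∑ i, v i ^ 2 ≤ d * (4 * m ^ 2) := by
  simpa using sum_le_sum fun i (_ : i ∈ univ) =>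
    sq_le_of_mem_signedIcc (Fintype.mem_piFinset.1 hv i)

lemma sum_sq_sub_le_of_mem_piFinset_signedIcc
    (hv : v ∈ Fintype.piFinset fun i => signedIcc (a i) m) (ha : 2 * d * m ≤ ∑ i, |a i|) :
    ∑ i, (a - v) i ^ 2 ≤ ∑ i, a i ^ 2 := by
  have h := sum_le_sum fun i (_ : i ∈ univ) =>
    sq_sub_le_of_mem_signedIcc (Fintype.mem_piFinset.1 hv i)
  simp only [sum_add_distrib, ← mul_sum, sum_const, card_univ, Fintype.card_fin, nsmul_eq_mul] at h
  simp only [Pi.sub_apply]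
  nlinarith

theorem pow_mul_gauss_le_tsum_latNorm_le {t R : ℝ} (ht : 0 ≤ t) (β : ℝ) (hm : 2 * d * m ≤ R)
    (ha : R ≤ latNorm a) :
    ((m : ℝ) + 1) ^ d * gauss d t (β • toRealVec a) ≤
      ∑' v : Fin d → ℤ, if latNorm v ≤ R then gauss d t (β • toRealVec (a - v)) else 0 := by
  set f : (Fin d → ℤ) → ℝ := fun v =>
    if latNorm v ≤ R then gauss d t (β • toRealVec (a - v)) else 0
  set B := Fintype.piFinset fun i => signedIcc (a i) m
  have hf : Summable f := summable_of_hasFiniteSupport <|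
    (finite_setOf_latNorm_le d R).subset fun v hv => by_contra fun h => hv (if_neg h)
  have hR : 0 ≤ R := le_trans (by positivity) hm
  have hBR (v : Fin d → ℤ) (hv : v ∈ B) : latNorm v ≤ R := by
    refine (Real.sqrt_le_left hR).2 ?_
    have hd : (d : ℝ) ≤ d ^ 2 := by exact_mod_cast Nat.le_self_pow two_ne_zero d
    calc ∑ i, ((v i : ℝ)) ^ 2 ≤ d * (4 * m ^ 2) := by
          exact_mod_cast sum_sq_le_of_mem_piFinset_signedIcc hv
      _ ≤ (2 * d * m) ^ 2 := by nlinarith [sq_nonneg (m : ℝ)]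
      _ ≤ R ^ 2 := pow_le_pow_left₀ (by positivity) hm 2
  have ha' : 2 * d * m ≤ ∑ i, |a i| := by
    have := hm.trans (ha.trans (latNorm_le_sum_abs a))
    exact_mod_cast this
  calc ((m : ℝ) + 1) ^ d * gauss d t (β • toRealVec a)
      = ∑ _v ∈ B, gauss d t (β • toRealVec a) := by
        simp [B, Fintype.card_piFinset, card_signedIcc]
    _ ≤ ∑ v ∈ B, f v := sum_le_sum fun v hv => by
        simp only [f, if_pos (hBR v hv)]
        exact gauss_smul_toRealVec_le_of_sum_sq_le d ht β
          (sum_sq_sub_le_of_mem_piFinset_signedIcc hv ha')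
    _ ≤ ∑' v, f v := hf.sum_le_tsum B fun v _ => by
        dsimp only [f]; split_ifs
        exacts [gauss_nonneg d ht _, le_rfl]

end SignedBox

lemma sqrt_le_of_mul_rpow_le {C s r : ℝ} (hC : 0 < C) (hs : 0 ≤ s)
    (h : C * s ^ ((1 : ℝ) / 6) ≤ r) : Real.sqrt s ≤ r ^ 3 / C ^ 3 := by
  rw [le_div_iff₀ (by positivity), Real.sqrt_eq_rpow,
    show (1 : ℝ) / 2 = 1 / 6 * (3 : ℕ) by norm_num, Real.rpow_mul hs, Real.rpow_natCast,
    ← mul_pow, mul_comm]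
  exact pow_le_pow_left₀ (by positivity) h 3

theorem gauss_point_le_ball_sum_general (β C₁ : ℝ) (hC₁ : 0 < C₁) :
    ∃ C₃ > (0 : ℝ), ∀ k n : ℕ, 1 ≤ k → 1 ≤ n → ∀ x y : Fin 3 → ℤ,
      C₁ * (k : ℝ) ^ ((1 : ℝ) / 6) ≤ latNorm (x - y) →
      Real.sqrt k * gauss 3 n (β • toRealVec (x - y)) ≤
        C₃ * ∑' z : Fin 3 → ℤ,
          if latNorm (z - y) ≤ C₁ * (k : ℝ) ^ ((1 : ℝ) / 6) then
            gauss 3 n (β • toRealVec (x - z))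
          else 0 := by
  refine ⟨216 / C₁ ^ 3, by positivity, fun k n _ _ x y hfar => ?_⟩
  set R := C₁ * (k : ℝ) ^ ((1 : ℝ) / 6)
  set m := ⌊R / 6⌋₊
  have hR : 0 ≤ R := by positivity
  have hm : 2 * (3 : ℕ) * (m : ℝ) ≤ R := by
    have := Nat.floor_le (div_nonneg hR (by norm_num : (0 : ℝ) ≤ 6)); push_cast; linarith
  have hsqrt : Real.sqrt k ≤ 216 / C₁ ^ 3 * ((m : ℝ) + 1) ^ 3 := by
    have hRm : R ≤ 6 * ((m : ℝ) + 1) := by have := Nat.lt_floor_add_one (R / 6); linarith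
    convert sqrt_le_of_mul_rpow_le hC₁ (Nat.cast_nonneg k) hRm using 1
    ring
  have hshift := (Equiv.addLeft y).tsum_eq fun z =>
    if latNorm (z - y) ≤ R then gauss 3 n (β • toRealVec (x - z)) else 0
  simp only [Equiv.coe_addLeft, add_sub_cancel_left, ← sub_sub] at hshift
  rw [← hshift]
  calc Real.sqrt k * gauss 3 n (β • toRealVec (x - y))
      ≤ 216 / C₁ ^ 3 * ((m : ℝ) + 1) ^ 3 * gauss 3 n (β • toRealVec (x - y)) :=
        mul_le_mul_of_nonneg_right hsqrt (gauss_nonneg 3 (Nat.cast_nonneg n) _)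
    _ ≤ _ := by
      rw [mul_assoc]
      exact mul_le_mul_of_nonneg_left
        (pow_mul_gauss_le_tsum_latNorm_le (Nat.cast_nonneg n) β hm hfar) (by positivity)

/-- for `d = 3`, a far Gaussian point mass is dominated by the
Gaussian mass of a ball of radius `C₁ k^{1/6}`:
`√k φ_n(β(x−y)) ≤ C₃ Σ_{|z−y| ≤ C₁ k^{1/6}} φ_n(β(x−z))`. -/
theorem gauss_point_le_ball_sum (β C₁ : ℝ) (hβ : 0 < β) (hC₁ : 0 < C₁) :
    ∃ C₃ > (0 : ℝ), ∀ k n : ℕ, 1 ≤ k → 1 ≤ n → ∀ x y : Fin 3 → ℤ,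
      C₁ * (k : ℝ) ^ ((1 : ℝ) / 6) ≤ latNorm (x - y) →
      Real.sqrt k * gauss 3 n (β • toRealVec (x - y)) ≤
        C₃ * ∑' z : Fin 3 → ℤ,
          if latNorm (z - y) ≤ C₁ * (k : ℝ) ^ ((1 : ℝ) / 6) then
            gauss 3 n (β • toRealVec (x - z))
          else 0 :=
  gauss_point_le_ball_sum_general β C₁ hC₁
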